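/- If every connective occurring in the formulae of a default theory ⟨W,D⟩ (in W and in all prerequisites, justifications, and consequents of D) is 1-reproducing, then ⟨W,D⟩ has exactly one stable extension. -/

import Mathlib

inductive Form : Type where
  | var : ℕ → Form
  | app : (n : ℕ) → ((Fin n → Bool) → Bool) → (Fin n → Form) → Form

namespace Form

def eval (σ : ℕ → Bool) : Form → Bool
  | var x => σ x
  | app _ f a => f (fun i => (a i).eval σ)

def tru : Form := app 0 (fun _ => true) (fun i => i.elim0)
def fls : Form := app 0 (fun _ => false) (fun i => i.elim0)
def neg (φ : Form) : Form := app 1 (fun v => !(v 0)) (fun _ => φ)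
def conj (φ ψ : Form) : Form := app 2 (fun v => v 0 && v 1) ![φ, ψ]
def disj (φ ψ : Form) : Form := app 2 (fun v => v 0 || v 1) ![φ, ψ]

end Form

/-- σ satisfies all formulae of A. -/
def Sat (σ : ℕ → Bool) (A : Set Form) : Prop := ∀ φ ∈ A, φ.eval σ = true

/-- Semantic consequence A ⊨ φ. -/
def Entails (A : Set Form) (φ : Form) : Prop := ∀ σ, Sat σ A → φ.eval σ = true

/-- Th(A) = {φ | A ⊨ φ}. -/
def Th (A : Set Form) : Set Form := {φ | Entails A φ}

def Consistent (A : Set Form) : Prop := ∃ σ, Sat σ A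

/-- A default rule (α : β / γ). -/
structure Default where
  pre : Form
  just : Form
  con : Form

/-- S contains W, is deductively closed, and closed under defaults applicable w.r.t. E. -/
def GammaClosed (W : Set Form) (D : Set Default) (E S : Set Form) : Prop :=
  W ⊆ S ∧ Th S = S ∧ ∀ d ∈ D, d.pre ∈ S → Form.neg d.just ∉ E → d.con ∈ S

/-- Γ(E): the smallest set satisfying the three closure conditions. -/
def Gamma (W : Set Form) (D : Set Default) (E : Set Form) : Set Form :=
  ⋂₀ {S | GammaClosed W D E S}

/-- E is a stable extension of ⟨W,D⟩. -/
def Stable (W : Set Form) (D : Set Default) (E : Set Form) : Prop :=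
  Gamma W D E = E

inductive UsesOnly (P : ∀ n, ((Fin n → Bool) → Bool) → Prop) : Form → Prop
  | var (x : ℕ) : UsesOnly P (Form.var x)
  | app {n : ℕ} {f : (Fin n → Bool) → Bool} {a : Fin n → Form} :
      P n f → (∀ i, UsesOnly P (a i)) → UsesOnly P (Form.app n f a)

def Rep1 : ∀ n : ℕ, ((Fin n → Bool) → Bool) → Prop :=
  fun _ f => f (fun _ => true) = true

/-! Any assignment σ satisfying W together with every justification and every consequent of D
makes the set of formulae true under σ closed under Γ(E), whatever E is. Hence every Γ(E) lies
inside it, so no Γ(E) contains the negation of a justification, and on such sets E the operator Γ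
agrees with Γ(∅): the stable extensions are exactly the fixed points of a constant map, i.e.
Γ(∅) alone. With 1-reproducing connectives the all-true assignment is such a σ. -/

theorem UsesOnly.eval_true {φ : Form} (h : UsesOnly Rep1 φ) :
    φ.eval (fun _ => true) = true := by
  induction h with
  | var x => rfl
  | @app n f a hf _ ih =>
    show f (fun i => (a i).eval fun _ => true) = true
    rw [funext ih]
    exact hf

theorem Form.eval_neg (σ : ℕ → Bool) (φ : Form) : φ.neg.eval σ = !φ.eval σ := rfl

theorem subset_Th (A : Set Form) : A ⊆ Th A := fun _ hφ _ hσ => hσ _ hφ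

theorem Th_setOf_eval (σ : ℕ → Bool) : Th {φ | φ.eval σ = true} = {φ | φ.eval σ = true} :=
  Set.Subset.antisymm (fun _ hφ => hφ σ fun _ hψ => hψ) (subset_Th _)

section Gamma

variable {W : Set Form} {D : Set Default}

theorem gammaClosed_setOf_eval {σ : ℕ → Bool} (hW : Sat σ W)
    (hcon : ∀ d ∈ D, d.con.eval σ = true) (E : Set Form) :
    GammaClosed W D E {φ | φ.eval σ = true} :=
  ⟨hW, Th_setOf_eval σ, fun d hd _ _ => hcon d hd⟩

theorem Gamma_subset_of_gammaClosed {E S : Set Form} (hS : GammaClosed W D E S) :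
    Gamma W D E ⊆ S :=
  Set.sInter_subset_of_mem hS

theorem gammaClosed_iff_gammaClosed_empty {E S : Set Form}
    (hE : ∀ d ∈ D, d.just.neg ∉ E) : GammaClosed W D E S ↔ GammaClosed W D ∅ S := by
  refine and_congr_right' (and_congr_right' (forall₂_congr fun d hd => ?_))
  simp only [hE d hd, Set.notMem_empty, not_false_eq_true, forall_const]

theorem Gamma_eq_Gamma_empty {E : Set Form} (hE : ∀ d ∈ D, d.just.neg ∉ E) :
    Gamma W D E = Gamma W D ∅ := by
  unfold Gamma
  simp only [gammaClosed_iff_gammaClosed_empty hE]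

theorem existsUnique_stable_of_sat {σ : ℕ → Bool} (hW : Sat σ W)
    (hD : ∀ d ∈ D, d.just.eval σ = true ∧ d.con.eval σ = true) :
    ∃! E, Stable W D E := by
  have hunblocked : ∀ E, ∀ d ∈ D, d.just.neg ∉ Gamma W D E := fun E d hd hneg => by
    have htrue := Gamma_subset_of_gammaClosed
      (gammaClosed_setOf_eval hW (fun d hd => (hD d hd).2) E) hneg
    simp [Form.eval_neg, (hD d hd).1] at htrue
  refine ⟨Gamma W D ∅, Gamma_eq_Gamma_empty (hunblocked ∅), fun E hE => ?_⟩
  rw [← hE, Gamma_eq_Gamma_empty (hE ▸ hunblocked E)]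

end Gamma

theorem stmt7_general (W : Set Form) (D : Set Default)
    (hW : ∀ φ ∈ W, UsesOnly Rep1 φ)
    (hDc : ∀ d ∈ D, UsesOnly Rep1 d.pre ∧ UsesOnly Rep1 d.just ∧ UsesOnly Rep1 d.con) :
    ∃! E : Set Form, Stable W D E :=
  existsUnique_stable_of_sat (fun φ hφ => (hW φ hφ).eval_true)
    fun d hd => ⟨(hDc d hd).2.1.eval_true, (hDc d hd).2.2.eval_true⟩

/-- If every connective occurring in ⟨W,D⟩ is 1-reproducing, then ⟨W,D⟩ has
exactly one stable extension. -/
theorem stmt7 (W : Set Form) (D : Set Default) (hD : D.Finite)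
    (hW : ∀ φ ∈ W, UsesOnly Rep1 φ)
    (hDc : ∀ d ∈ D, UsesOnly Rep1 d.pre ∧ UsesOnly Rep1 d.just ∧ UsesOnly Rep1 d.con) :
    ∃! E : Set Form, Stable W D E :=
  stmt7_general W D hW hDc
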